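/- arXiv:1907.12482 — 3 statements merged into one kernel-verified Lean document; each statement's English description precedes it below -/
import Mathlib

section
/- Let λ, c, d, g, e₁, e₂ be positive integers with gcd(c,d)=1, c > d, and suppose d divides e₁ - λ and c divides e₂ - λ (with e₁ ≥ λ, e₂ ≥ λ). Set r₁ = 2λ + a·(e₂-λ)/c and r₂ = 2λ - a·(e₁-λ)/d where a = c - d. If integers τ₁, τ₂ satisfy 0 ≤ τ₁ ≤ e₁, 0 ≤ τ₂ ≤ e₂, τ₁ = λ - t·d and τ₂ = λ + t·c for some integer t, then r₂ ≤ τ₁ + τ₂ ≤ r₁. -/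
theorem stmt_1 (lam c d g e₁ e₂ a r₁ r₂ τ₁ τ₂ t : ℤ)
    (hlam : 0 < lam) (hc : 0 < c) (hd : 0 < d) (hg : 0 < g)
    (he₁ : 0 < e₁) (he₂ : 0 < e₂)
    (hcop : IsCoprime c d) (hcd : c > d)
    (hdvd1 : d ∣ e₁ - lam) (hdvd2 : c ∣ e₂ - lam)
    (he₁lam : e₁ ≥ lam) (he₂lam : e₂ ≥ lam)
    (ha : a = c - d)
    (hr₁ : r₁ = 2 * lam + a * ((e₂ - lam) / c))
    (hr₂ : r₂ = 2 * lam - a * ((e₁ - lam) / d))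
    (hτ₁0 : 0 ≤ τ₁) (hτ₁e : τ₁ ≤ e₁) (hτ₂0 : 0 ≤ τ₂) (hτ₂e : τ₂ ≤ e₂)
    (hτ₁ : τ₁ = lam - t * d) (hτ₂ : τ₂ = lam + t * c) :
    r₂ ≤ τ₁ + τ₂ ∧ τ₁ + τ₂ ≤ r₁ := by
  obtain ⟨q1, hq1⟩ := hdvd1
  obtain ⟨q2, hq2⟩ := hdvd2
  have h1 : (e₁ - lam) / d = q1 := by rw [hq1]; exact Int.mul_ediv_cancel_left _ hd.ne'
  have h2 : (e₂ - lam) / c = q2 := by rw [hq2]; exact Int.mul_ediv_cancel_left _ hc.ne'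
  have ha0 : 0 < a := by omega
  have ht2 : t ≤ q2 := by
    have : t * c ≤ q2 * c := by nlinarith
    exact le_of_mul_le_mul_right this hc
  have ht1 : -q1 ≤ t := by
    have : -q1 * d ≤ t * d := by nlinarith
    exact le_of_mul_le_mul_right this hd
  constructor
  · rw [hr₂, h1]; nlinarith
  · rw [hr₁, h2]; nlinarith
end

section
/- Suppose λ ≥ 2 and c = λ, d = 1 (so gcd(c,d) = 1 automatically), and integers x, y ≥ 0 satisfy xλ + y = v - 2λ and x + yλ = 2λ - 1 for a positive integer v. Then (λ+1) divides v - 1, and λ² + λ + 1 - v = (λ² - 1)(y - 1). In particular, if v ≤ λ² + λ + 1 then y ≥ 1. -/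
theorem stmt_7 (lam x y v : ℤ) (hlam : 2 ≤ lam) (hx : 0 ≤ x) (hy : 0 ≤ y)
    (hv : 0 < v)
    (h1 : x * lam + y = v - 2 * lam) (h2 : x + y * lam = 2 * lam - 1) :
    (lam + 1) ∣ (v - 1) ∧
    lam ^ 2 + lam + 1 - v = (lam ^ 2 - 1) * (y - 1) ∧
    (v ≤ lam ^ 2 + lam + 1 → 1 ≤ y) := by
  have hv' : v = 2 * lam ^ 2 + lam - y * (lam ^ 2 - 1) := by nlinarith
  refine ⟨⟨2 * lam - 1 - y * (lam - 1), by ring_nf; nlinarith⟩, by nlinarith, ?_⟩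
  intro h
  nlinarith [sq_nonneg lam, sq_nonneg (lam - 1)]
end

section
/- Let n ≥ 1 and v = 2ⁿ + 1. Suppose g, c, d, e₁, e₂, λ are positive integers with g = 2^m for some 1 ≤ m ≤ n-1, gcd(c,d) = 1, c + d = 2^(n-m), e₁ + e₂ = 2ⁿ + 1, and e₁·(2^m·c + 1)·c + e₂·(2^m·d + 1)·d = λ·(2ⁿ + 1)·2^(n-m). Then a contradiction follows (no such integers exist). -/
theorem stmt_9 (n m g c d e₁ e₂ lam : ℕ) (hn : 1 ≤ n)
    (hg : 0 < g) (hc : 0 < c) (hd : 0 < d) (he₁ : 0 < e₁) (he₂ : 0 < e₂)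
    (hlam : 0 < lam)
    (hm1 : 1 ≤ m) (hm2 : m ≤ n - 1) (hgm : g = 2 ^ m)
    (hcop : Nat.Coprime c d) (hcd : c + d = 2 ^ (n - m))
    (he : e₁ + e₂ = 2 ^ n + 1)
    (heq : e₁ * (2 ^ m * c + 1) * c + e₂ * (2 ^ m * d + 1) * d
      = lam * (2 ^ n + 1) * 2 ^ (n - m)) :
    False := by
  have hnm : 1 ≤ n - m := by omega
  -- c + d is even
  have h2cd : 2 ∣ c + d := by
    rw [hcd]; exact dvd_pow_self 2 (by omega)
  -- both c and d are odd
  have hco : c % 2 = 1 := by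
    rcases Nat.even_or_odd c with hce | hcodd
    · have hde : 2 ∣ d := (Nat.dvd_add_right hce.two_dvd).mp h2cd
      have h2g : 2 ∣ Nat.gcd c d := Nat.dvd_gcd hce.two_dvd hde
      rw [hcop] at h2g; omega
    · exact Nat.odd_iff.mp hcodd
  have hdo : d % 2 = 1 := by omega
  -- reduce mod 2 via ZMod 2
  have key := congrArg (Nat.cast : ℕ → ZMod 2) heq
  have h20 : (2 : ZMod 2) = 0 := by decide
  have hc1 : (c : ZMod 2) = 1 := by
    rw [← ZMod.natCast_mod c 2, hco]; simp
  have hd1 : (d : ZMod 2) = 1 := by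
    rw [← ZMod.natCast_mod d 2, hdo]; simp
  push_cast at key
  rw [hc1, hd1, h20, zero_pow (by omega : m ≠ 0),
    zero_pow (by omega : n - m ≠ 0)] at key
  have he2 : (e₁ : ZMod 2) + e₂ = 1 := by
    have := congrArg (Nat.cast : ℕ → ZMod 2) he
    push_cast at this
    rw [h20, zero_pow (by omega : n ≠ 0)] at this
    simpa using this
  rw [show ((0 : ZMod 2) * 1 + 1) = 1 by ring] at key
  simp only [mul_one, mul_zero] at key
  rw [he2] at key
  exact one_ne_zero key
end
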